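/- For any τ ≥ 0 and any reals v₁, v₂ with |v₁| ≤ 1 and |v₂| ≤ 1: |e^τ v₁/sqrt(1+(e^{2τ}-1)v₁²) - e^τ v₂/sqrt(1+(e^{2τ}-1)v₂²)| ≤ e^{4τ} |v₁ - v₂|. -/

import Mathlib

/-!
For `b ≥ 0` the map `x ↦ x / √(1 + b x²)` has derivative `(1 + b x²)^(-3/2) ∈ (0, 1]`, so it is
1-Lipschitz on all of `ℝ`; with `b = e^{2τ} - 1` the propagator is `e^τ` times this map, and
`e^τ ≤ e^{4τ}`.
-/

open Real

lemma hasDerivAt_div_sqrt_one_add_mul_sq {b : ℝ} (hb : 0 ≤ b) (x : ℝ) :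
    HasDerivAt (fun x => x / √(1 + b * x ^ 2)) (1 / √(1 + b * x ^ 2) ^ 3) x := by
  have hpos : 0 < 1 + b * x ^ 2 := by positivity
  have hsqrt_pos : 0 < √(1 + b * x ^ 2) := sqrt_pos.mpr hpos
  have hinner : HasDerivAt (fun x => 1 + b * x ^ 2) (b * (2 * x)) x := by
    simpa using ((hasDerivAt_pow 2 x).const_mul b).const_add 1
  have hquot := (hasDerivAt_id x).div ((hasDerivAt_sqrt hpos.ne').comp x hinner) hsqrt_pos.ne'
  refine hquot.congr_deriv ?_
  simp only [Function.comp_apply, id]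
  have hsq : √(1 + b * x ^ 2) ^ 2 = 1 + b * x ^ 2 := sq_sqrt hpos.le
  field_simp
  linear_combination hsq

lemma lipschitzWith_div_sqrt_one_add_mul_sq {b : ℝ} (hb : 0 ≤ b) :
    LipschitzWith 1 (fun x => x / √(1 + b * x ^ 2)) := by
  have hderiv := hasDerivAt_div_sqrt_one_add_mul_sq hb
  refine lipschitzWith_of_nnnorm_deriv_le (fun x => (hderiv x).differentiableAt) fun x => ?_
  have hsqrt_ge : 1 ≤ √(1 + b * x ^ 2) := one_le_sqrt.mpr (by nlinarith [sq_nonneg x])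
  rw [(hderiv x).deriv, ← NNReal.coe_le_coe, coe_nnnorm, norm_of_nonneg (by positivity)]
  simpa using inv_le_one_of_one_le₀ (one_le_pow₀ hsqrt_ge (n := 3))

theorem stmt_15_general (τ v₁ v₂ : ℝ) (hτ : 0 ≤ τ) :
    |Real.exp τ * v₁ / Real.sqrt (1 + (Real.exp (2 * τ) - 1) * v₁ ^ 2) -
      Real.exp τ * v₂ / Real.sqrt (1 + (Real.exp (2 * τ) - 1) * v₂ ^ 2)| ≤
      Real.exp (4 * τ) * |v₁ - v₂| := by
  set g : ℝ → ℝ := fun x => x / √(1 + (exp (2 * τ) - 1) * x ^ 2)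
  have hg : LipschitzWith 1 g :=
    lipschitzWith_div_sqrt_one_add_mul_sq (sub_nonneg.mpr (one_le_exp (by linarith)))
  have hexp : exp τ ≤ exp (4 * τ) := exp_le_exp.mpr (by linarith)
  calc |exp τ * v₁ / √(1 + (exp (2 * τ) - 1) * v₁ ^ 2) -
        exp τ * v₂ / √(1 + (exp (2 * τ) - 1) * v₂ ^ 2)|
      = exp τ * |g v₁ - g v₂| := by
        simp only [g, mul_div_assoc, ← mul_sub, abs_mul, abs_of_pos (exp_pos τ)]
    _ ≤ exp τ * |v₁ - v₂| := by
        have := hg.dist_le_mul v₁ v₂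
        simp only [NNReal.coe_one, one_mul, Real.dist_eq] at this
        exact mul_le_mul_of_nonneg_left this (exp_pos τ).le
    _ ≤ exp (4 * τ) * |v₁ - v₂| := by gcongr

theorem stmt_15 (τ v₁ v₂ : ℝ) (hτ : 0 ≤ τ) (h₁ : |v₁| ≤ 1) (h₂ : |v₂| ≤ 1) :
    |Real.exp τ * v₁ / Real.sqrt (1 + (Real.exp (2 * τ) - 1) * v₁ ^ 2) -
      Real.exp τ * v₂ / Real.sqrt (1 + (Real.exp (2 * τ) - 1) * v₂ ^ 2)| ≤
      Real.exp (4 * τ) * |v₁ - v₂| :=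
  stmt_15_general τ v₁ v₂ hτ
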